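/- arXiv:1006.4909 — 4 statements merged into one kernel-verified Lean document; each statement's English description precedes it below -/
import Mathlib

section
/- Let f ∈ H^{0,1}(ℝ⁺) (i.e. f ∈ L²(ℝ⁺) with x·f(x) ∈ L²(ℝ⁺)) and g ∈ H^{1,1}(ℝ⁺) (g absolutely continuous with g, g', x·g ∈ L²(ℝ⁺)). Then the function x ↦ ∫_x^∞ f(y)g(y) dy belongs to H^{1,1}(ℝ⁺) and its H^{1,1}-norm is bounded by c·‖f‖_{H^{0,1}(ℝ⁺)}·‖g‖_{H^{1,1}(ℝ⁺)} for some absolute constant c. -/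
open MeasureTheory Set

/-- The `H^{0,1}(ℝ⁺)` norm: `‖f‖_{L²(ℝ⁺)} + ‖x f‖_{L²(ℝ⁺)}`. -/
noncomputable def normH01plus (f : ℝ → ℂ) : ℝ :=
  (eLpNorm f 2 (volume.restrict (Ioi (0:ℝ)))).toReal +
  (eLpNorm (fun x : ℝ => (x : ℂ) * f x) 2 (volume.restrict (Ioi (0:ℝ)))).toReal

/-- The `H^{1,1}(ℝ⁺)` norm of `g` with derivative `g'`:
`‖g‖_{L²} + ‖g'‖_{L²} + ‖x g‖_{L²}` on `ℝ⁺`. -/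
noncomputable def normH11plus (g g' : ℝ → ℂ) : ℝ :=
  (eLpNorm g 2 (volume.restrict (Ioi (0:ℝ)))).toReal +
  (eLpNorm g' 2 (volume.restrict (Ioi (0:ℝ)))).toReal +
  (eLpNorm (fun x : ℝ => (x : ℂ) * g x) 2 (volume.restrict (Ioi (0:ℝ)))).toReal

/-!
Write `T x = ∫_x^∞ f g`. Since `y ≥ s` on `(s, ∞)`, Cauchy–Schwarz bounds `|T s|`, `s |T s|` and
`s² |T s|` by `‖f‖‖g‖`, `‖x f‖‖g‖` and `‖x f‖‖x g‖`; hence `T` and `x T` are dominated by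
multiples of `(1 + x)⁻¹`, whose `L²(ℝ⁺)` norm is `1`. The derivative `-f g` is controlled by
`‖f‖ sup |g|`, and `sup |g|² ≤ 2 ‖g‖ ‖g'‖` because `|g|²` is integrable with integrable
derivative `2 ⟪g, g'⟫`, so it vanishes at infinity. Finally `T` is differentiable almost
everywhere by the Lebesgue differentiation theorem.
-/

open Filter Topology
open scoped ENNReal

local notation "μ₊" => volume.restrict (Ioi (0:ℝ))

section CauchySchwarz

variable {α E F : Type*} [MeasurableSpace α] [NormedAddCommGroup E] [NormedAddCommGroup F]
  {μ : Measure α}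

theorem integral_norm_mul_norm_le {u : α → E} {v : α → F} (hu : MemLp u 2 μ)
    (hv : MemLp v 2 μ) :
    ∫ x, ‖u x‖ * ‖v x‖ ∂μ ≤ (eLpNorm u 2 μ).toReal * (eLpNorm v 2 μ).toReal := by
  have holder : eLpNorm (fun x => ‖u x‖ * ‖v x‖) 1 μ ≤ 1 * eLpNorm u 2 μ * eLpNorm v 2 μ :=
    eLpNorm_le_eLpNorm_mul_eLpNorm'_of_norm hu.1 hv.1 (fun a b => ‖a‖ * ‖b‖) 1
      (.of_forall fun x => by simp)
  rw [one_mul] at holder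
  calc ∫ x, ‖u x‖ * ‖v x‖ ∂μ = (eLpNorm (fun x => ‖u x‖ * ‖v x‖) 1 μ).toReal := by
        rw [eLpNorm_one_eq_lintegral_enorm, ← integral_norm_eq_lintegral_enorm
          (f := fun x => ‖u x‖ * ‖v x‖) (hu.1.norm.mul hv.1.norm)]
        simp_rw [norm_mul, norm_norm]
    _ ≤ _ := by
      rw [← ENNReal.toReal_mul]
      exact ENNReal.toReal_mono (ENNReal.mul_ne_top hu.2.ne hv.2.ne) holder

theorem setIntegral_norm_mul_norm_le {s t : Set α} {u : α → E} {v : α → F}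
    (hu : MemLp u 2 (μ.restrict s)) (hv : MemLp v 2 (μ.restrict s)) (hts : t ⊆ s) :
    ∫ x in t, ‖u x‖ * ‖v x‖ ∂μ ≤
      (eLpNorm u 2 (μ.restrict s)).toReal * (eLpNorm v 2 (μ.restrict s)).toReal := by
  have hrestrict : μ.restrict t ≤ μ.restrict s := Measure.restrict_mono hts le_rfl
  refine (integral_norm_mul_norm_le (hu.mono_measure hrestrict)
    (hv.mono_measure hrestrict)).trans ?_
  gcongr
  · exact hu.2.ne
  · exact hv.2.ne

theorem mul_norm_setIntegral_mul_le {𝕜 : Type*} [RCLike 𝕜] {s t : Set α} {u v : α → 𝕜}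
    {u' : α → E} {v' : α → F} {c : ℝ} (hc : 0 ≤ c) (ht : MeasurableSet t) (hts : t ⊆ s)
    (hu' : MemLp u' 2 (μ.restrict s)) (hv' : MemLp v' 2 (μ.restrict s))
    (h : ∀ x ∈ t, c * (‖u x‖ * ‖v x‖) ≤ ‖u' x‖ * ‖v' x‖) :
    c * ‖∫ x in t, u x * v x ∂μ‖ ≤
      (eLpNorm u' 2 (μ.restrict s)).toReal * (eLpNorm v' 2 (μ.restrict s)).toReal := by
  have hrestrict : μ.restrict t ≤ μ.restrict s := Measure.restrict_mono hts le_rfl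
  calc c * ‖∫ x in t, u x * v x ∂μ‖ ≤ c * ∫ x in t, ‖u x‖ * ‖v x‖ ∂μ := by
        gcongr
        simpa only [norm_mul] using norm_integral_le_integral_norm (fun x => u x * v x)
    _ = ∫ x in t, c * (‖u x‖ * ‖v x‖) ∂μ := (integral_const_mul c _).symm
    _ ≤ ∫ x in t, ‖u' x‖ * ‖v' x‖ ∂μ :=
        integral_mono_of_nonneg (.of_forall fun x => by positivity)
          ((hu'.norm.mono_measure hrestrict).integrable_mul (hv'.norm.mono_measure hrestrict))
          (ae_restrict_of_forall_mem ht h)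
    _ ≤ _ := setIntegral_norm_mul_norm_le hu' hv' hts

end CauchySchwarz

section SobolevEmbedding

variable {E : Type*} [NormedAddCommGroup E] [InnerProductSpace ℝ E] {g g' : ℝ → E} {a x : ℝ}

theorem sq_norm_le_of_memLp_of_hasDerivAt (hg : MemLp g 2 (volume.restrict (Ioi a)))
    (hg' : MemLp g' 2 (volume.restrict (Ioi a))) (hderiv : ∀ y ∈ Ioi a, HasDerivAt g (g' y) y)
    (hx : a < x) :
    ‖g x‖ ^ 2 ≤ 2 * ((eLpNorm g 2 (volume.restrict (Ioi a))).toReal *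
      (eLpNorm g' 2 (volume.restrict (Ioi a))).toReal) := by
  have hxa : Ioi x ⊆ Ioi a := Ioi_subset_Ioi hx.le
  have hsq : ∀ y ∈ Ioi a, HasDerivAt (‖g ·‖ ^ 2) (2 * inner ℝ (g y) (g' y)) y :=
    fun y hy => (hderiv y hy).norm_sq
  have hsq_int : IntegrableOn (‖g ·‖ ^ 2) (Ioi a) :=
    (memLp_two_iff_integrable_sq_norm hg.1).1 hg
  have hinner_le : ∀ y, ‖2 * inner ℝ (g y) (g' y)‖ ≤ 2 * (‖g y‖ * ‖g' y‖) := fun y => by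
    rw [norm_mul, Real.norm_two]
    exact mul_le_mul_of_nonneg_left (norm_inner_le_norm _ _) zero_le_two
  have hbound_int : IntegrableOn (fun y => 2 * (‖g y‖ * ‖g' y‖)) (Ioi a) :=
    (hg.norm.integrable_mul hg'.norm).const_mul 2
  have hinner_int : IntegrableOn (fun y => 2 * inner ℝ (g y) (g' y)) (Ioi a) :=
    hbound_int.mono' ((hg.1.inner hg'.1).const_mul 2) (.of_forall hinner_le)
  have hftc : ∫ y in Ioi x, 2 * inner ℝ (g y) (g' y) = 0 - ‖g x‖ ^ 2 :=
    integral_Ioi_of_hasDerivAt_of_tendsto' (fun y hy => hsq y (lt_of_lt_of_le hx hy))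
      (hinner_int.mono_set hxa)
      (tendsto_zero_of_hasDerivAt_of_integrableOn_Ioi hsq hinner_int hsq_int)
  calc ‖g x‖ ^ 2 = -∫ y in Ioi x, 2 * inner ℝ (g y) (g' y) := by rw [hftc]; ring
    _ ≤ ∫ y in Ioi x, 2 * (‖g y‖ * ‖g' y‖) :=
        (neg_le_abs _).trans ((Real.norm_eq_abs _).symm.trans_le
          (norm_integral_le_of_norm_le (hbound_int.mono_set hxa) (.of_forall hinner_le)))
    _ = 2 * ∫ y in Ioi x, ‖g y‖ * ‖g' y‖ := integral_const_mul 2 _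
    _ ≤ _ := by gcongr; exact setIntegral_norm_mul_norm_le hg hg' hxa

theorem norm_le_of_memLp_of_hasDerivAt (hg : MemLp g 2 (volume.restrict (Ioi a)))
    (hg' : MemLp g' 2 (volume.restrict (Ioi a))) (hderiv : ∀ y ∈ Ioi a, HasDerivAt g (g' y) y)
    (hx : a < x) :
    ‖g x‖ ≤ (eLpNorm g 2 (volume.restrict (Ioi a))).toReal +
      (eLpNorm g' 2 (volume.restrict (Ioi a))).toReal := by
  have hsq := sq_norm_le_of_memLp_of_hasDerivAt hg hg' hderiv hx
  refine (pow_le_pow_iff_left₀ (norm_nonneg _) (by positivity) two_ne_zero).1 ?_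
  nlinarith [sq_nonneg ((eLpNorm g 2 (volume.restrict (Ioi a))).toReal -
    (eLpNorm g' 2 (volume.restrict (Ioi a))).toReal)]

end SobolevEmbedding

theorem eLpNorm_inv_one_add : eLpNorm (fun x : ℝ => (1 + x)⁻¹) 2 μ₊ = 1 := by
  have hderiv : ∀ x ∈ Ici (0:ℝ), HasDerivAt (fun y => -(1 + y)⁻¹) (((1 + x) ^ 2)⁻¹) x := by
    intro x hx
    have hx : 1 + x ≠ 0 := by simp only [mem_Ici] at hx; positivity
    exact (((hasDerivAt_id x).const_add 1).inv hx).neg.congr_deriv (by simp [neg_div])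
  have hlim : Tendsto (fun y : ℝ => -(1 + y)⁻¹) atTop (𝓝 0) := by
    simpa using
      (tendsto_inv_atTop_zero.comp (tendsto_atTop_add_const_left atTop (1:ℝ) tendsto_id)).neg
  have hsq : (fun x : ℝ => ‖(1 + x)⁻¹‖ ^ 2) = fun x => ((1 + x) ^ 2)⁻¹ := by
    ext x; simp [sq_abs, inv_pow]
  have hsq_int := integrableOn_Ioi_deriv_of_nonneg' hderiv (fun x _ => by positivity) hlim
  have hsq_integral := integral_Ioi_of_hasDerivAt_of_nonneg' hderiv (fun x _ => by positivity) hlim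
  have hmem : MemLp (fun x : ℝ => (1 + x)⁻¹) 2 μ₊ :=
    (memLp_two_iff_integrable_sq_norm (by fun_prop)).2 (hsq ▸ hsq_int)
  rw [hmem.eLpNorm_eq_integral_rpow_norm two_ne_zero ENNReal.ofNat_ne_top]
  norm_num [hsq_integral]

theorem memLp_and_eLpNorm_le_of_norm_le_mul_inv_one_add {E : Type*} [NormedAddCommGroup E]
    {F : ℝ → E} {C : ℝ} (hF : AEStronglyMeasurable F μ₊)
    (hbound : ∀ x ∈ Ioi 0, ‖F x‖ ≤ C * (1 + x)⁻¹) :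
    MemLp F 2 μ₊ ∧ (eLpNorm F 2 μ₊).toReal ≤ C := by
  have hC : 0 ≤ C := by have := hbound 1 (mem_Ioi.2 one_pos); nlinarith [norm_nonneg (F 1)]
  have hbound' : ∀ᵐ x ∂μ₊, ‖F x‖ ≤ C * ‖(1 + x)⁻¹‖ := by
    filter_upwards [ae_restrict_mem measurableSet_Ioi] with x hx
    rw [Real.norm_of_nonneg (by simp only [mem_Ioi] at hx; positivity)]
    exact hbound x hx
  have hw : MemLp (fun x : ℝ => (1 + x)⁻¹) 2 μ₊ :=
    ⟨by fun_prop, by rw [eLpNorm_inv_one_add]; exact ENNReal.one_lt_top⟩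
  refine ⟨hw.of_le_mul hF hbound', ENNReal.toReal_le_of_le_ofReal hC ?_⟩
  simpa [eLpNorm_inv_one_add] using eLpNorm_le_mul_eLpNorm_of_ae_le_mul hbound' 2

section TailIntegral

variable {E : Type*} [NormedAddCommGroup E] [NormedSpace ℝ E] {h : ℝ → E} {a : ℝ}

theorem eqOn_integral_Ioi_sub_primitive_indicator (hh : IntegrableOn h (Ioi a)) :
    EqOn (fun x => ∫ y in Ioi x, h y)
      (fun x => (∫ y in Ioi a, h y) - ∫ y in a..x, (Ioi a).indicator h y) (Ici a) := by
  intro x hx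
  have hprimitive : ∫ y in a..x, (Ioi a).indicator h y = ∫ y in a..x, h y := by
    rw [intervalIntegral.integral_of_le hx, intervalIntegral.integral_of_le hx]
    exact setIntegral_congr_fun measurableSet_Ioc
      fun y hy => indicator_of_mem (Ioc_subset_Ioi_self hy) h
  dsimp only
  rw [hprimitive, ← intervalIntegral.integral_Ioi_sub_Ioi hh hx, sub_sub_cancel]

theorem continuousOn_integral_Ioi (hh : IntegrableOn h (Ioi a)) :
    ContinuousOn (fun x => ∫ y in Ioi x, h y) (Ici a) := by
  refine ContinuousOn.congr ?_ (eqOn_integral_Ioi_sub_primitive_indicator hh)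
  have hint : Integrable ((Ioi a).indicator h) :=
    (integrable_indicator_iff measurableSet_Ioi).2 hh
  exact Continuous.continuousOn (continuous_const.fun_sub
    (intervalIntegral.continuous_primitive (fun _ _ => hint.intervalIntegrable) a))

theorem ae_hasDerivAt_integral_Ioi [CompleteSpace E] (hh : IntegrableOn h (Ioi a)) :
    ∀ᵐ x ∂(volume.restrict (Ioi a)), HasDerivAt (fun x => ∫ y in Ioi x, h y) (-h x) x := by
  have hint : Integrable ((Ioi a).indicator h) :=
    (integrable_indicator_iff measurableSet_Ioi).2 hh
  filter_upwards [ae_restrict_of_ae (LocallyIntegrable.ae_hasDerivAt_integral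
    hint.locallyIntegrable), ae_restrict_mem measurableSet_Ioi] with x hderiv hx
  have hsub := (hasDerivAt_const x (∫ y in Ioi a, h y)).fun_sub (hderiv a)
  rw [zero_sub, indicator_of_mem hx] at hsub
  exact hsub.congr_of_eventuallyEq <| eventually_of_mem (Ioi_mem_nhds hx)
    fun y hy => eqOn_integral_Ioi_sub_primitive_indicator hh (mem_Ici_of_Ioi hy)

end TailIntegral

theorem mul_norm_le_norm_ofReal_mul {s y : ℝ} (hs : 0 ≤ s) (hsy : s ≤ y) (z : ℂ) :
    s * ‖z‖ ≤ ‖(y : ℂ) * z‖ := by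
  rw [norm_mul, Complex.norm_of_nonneg (hs.trans hsy)]
  gcongr

section IntegralTailOfProduct

variable {f g : ℝ → ℂ}

theorem norm_integral_Ioi_mul_le (hf : MemLp f 2 μ₊)
    (hxf : MemLp (fun x : ℝ => (x : ℂ) * f x) 2 μ₊) (hg : MemLp g 2 μ₊) {s : ℝ} (hs : 0 < s) :
    ‖∫ y in Ioi s, f y * g y‖ ≤ normH01plus f * (eLpNorm g 2 μ₊).toReal * (1 + s)⁻¹ := by
  have hsub : Ioi s ⊆ Ioi 0 := Ioi_subset_Ioi hs.le
  have hbound : 1 * ‖∫ y in Ioi s, f y * g y‖ ≤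
      (eLpNorm f 2 μ₊).toReal * (eLpNorm g 2 μ₊).toReal :=
    mul_norm_setIntegral_mul_le zero_le_one measurableSet_Ioi hsub hf hg
      fun y _ => (one_mul _).le
  have hbound_weighted : s * ‖∫ y in Ioi s, f y * g y‖ ≤
      (eLpNorm (fun x : ℝ => (x : ℂ) * f x) 2 μ₊).toReal * (eLpNorm g 2 μ₊).toReal :=
    mul_norm_setIntegral_mul_le hs.le measurableSet_Ioi hsub hxf hg fun y hy => by
      rw [← mul_assoc]
      gcongr
      exact mul_norm_le_norm_ofReal_mul hs.le (le_of_lt hy) _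
  rw [← div_eq_mul_inv, le_div_iff₀ (by positivity), normH01plus]
  linarith

theorem norm_ofReal_mul_integral_Ioi_mul_le (hxf : MemLp (fun x : ℝ => (x : ℂ) * f x) 2 μ₊)
    (hg : MemLp g 2 μ₊) (hxg : MemLp (fun x : ℝ => (x : ℂ) * g x) 2 μ₊) {s : ℝ} (hs : 0 < s) :
    ‖(s : ℂ) * ∫ y in Ioi s, f y * g y‖ ≤
      (eLpNorm (fun x : ℝ => (x : ℂ) * f x) 2 μ₊).toReal *
        ((eLpNorm g 2 μ₊).toReal + (eLpNorm (fun x : ℝ => (x : ℂ) * g x) 2 μ₊).toReal) *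
        (1 + s)⁻¹ := by
  have hsub : Ioi s ⊆ Ioi 0 := Ioi_subset_Ioi hs.le
  have hbound : s * ‖∫ y in Ioi s, f y * g y‖ ≤
      (eLpNorm (fun x : ℝ => (x : ℂ) * f x) 2 μ₊).toReal * (eLpNorm g 2 μ₊).toReal :=
    mul_norm_setIntegral_mul_le hs.le measurableSet_Ioi hsub hxf hg fun y hy => by
      rw [← mul_assoc]
      gcongr
      exact mul_norm_le_norm_ofReal_mul hs.le (le_of_lt hy) _
  have hbound_weighted : s ^ 2 * ‖∫ y in Ioi s, f y * g y‖ ≤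
      (eLpNorm (fun x : ℝ => (x : ℂ) * f x) 2 μ₊).toReal *
        (eLpNorm (fun x : ℝ => (x : ℂ) * g x) 2 μ₊).toReal :=
    mul_norm_setIntegral_mul_le (sq_nonneg s) measurableSet_Ioi hsub hxf hxg fun y hy => by
      rw [show s ^ 2 * (‖f y‖ * ‖g y‖) = s * ‖f y‖ * (s * ‖g y‖) by ring]
      gcongr <;> exact mul_norm_le_norm_ofReal_mul hs.le (le_of_lt hy) _
  rw [← div_eq_mul_inv, le_div_iff₀ (by positivity), norm_mul, Complex.norm_of_nonneg hs.le]
  linarith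

theorem memLp_and_eLpNorm_integral_Ioi_mul_le (hf : MemLp f 2 μ₊)
    (hxf : MemLp (fun x : ℝ => (x : ℂ) * f x) 2 μ₊) (hg : MemLp g 2 μ₊) :
    MemLp (fun x : ℝ => ∫ y in Ioi x, f y * g y) 2 μ₊ ∧
      (eLpNorm (fun x : ℝ => ∫ y in Ioi x, f y * g y) 2 μ₊).toReal ≤
        normH01plus f * (eLpNorm g 2 μ₊).toReal :=
  memLp_and_eLpNorm_le_of_norm_le_mul_inv_one_add
    (((continuousOn_integral_Ioi (hf.integrable_mul hg)).mono Ioi_subset_Ici_self)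
      |>.aestronglyMeasurable measurableSet_Ioi)
    fun _ hs => norm_integral_Ioi_mul_le hf hxf hg hs

theorem memLp_and_eLpNorm_ofReal_mul_integral_Ioi_mul_le (hf : MemLp f 2 μ₊)
    (hxf : MemLp (fun x : ℝ => (x : ℂ) * f x) 2 μ₊) (hg : MemLp g 2 μ₊)
    (hxg : MemLp (fun x : ℝ => (x : ℂ) * g x) 2 μ₊) :
    MemLp (fun x : ℝ => (x : ℂ) * ∫ y in Ioi x, f y * g y) 2 μ₊ ∧
      (eLpNorm (fun x : ℝ => (x : ℂ) * ∫ y in Ioi x, f y * g y) 2 μ₊).toReal ≤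
        (eLpNorm (fun x : ℝ => (x : ℂ) * f x) 2 μ₊).toReal *
          ((eLpNorm g 2 μ₊).toReal + (eLpNorm (fun x : ℝ => (x : ℂ) * g x) 2 μ₊).toReal) :=
  memLp_and_eLpNorm_le_of_norm_le_mul_inv_one_add
    ((Complex.continuous_ofReal.continuousOn.mul
      ((continuousOn_integral_Ioi (hf.integrable_mul hg)).mono Ioi_subset_Ici_self))
      |>.aestronglyMeasurable measurableSet_Ioi)
    fun _ hs => norm_ofReal_mul_integral_Ioi_mul_le hxf hg hxg hs

theorem eLpNorm_mul_le_of_hasDerivAt {g' : ℝ → ℂ} (hf : MemLp f 2 μ₊) (hg : MemLp g 2 μ₊)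
    (hg' : MemLp g' 2 μ₊) (hderiv : ∀ x ∈ Ioi (0:ℝ), HasDerivAt g (g' x) x) :
    (eLpNorm (fun x => f x * g x) 2 μ₊).toReal ≤
      (eLpNorm f 2 μ₊).toReal * ((eLpNorm g 2 μ₊).toReal + (eLpNorm g' 2 μ₊).toReal) := by
  have hbound : ∀ᵐ x ∂μ₊, ‖f x * g x‖ ≤
      ((eLpNorm g 2 μ₊).toReal + (eLpNorm g' 2 μ₊).toReal) * ‖f x‖ := by
    filter_upwards [ae_restrict_mem measurableSet_Ioi] with x hx
    rw [norm_mul, mul_comm]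
    gcongr
    exact norm_le_of_memLp_of_hasDerivAt hg hg' hderiv hx
  refine (ENNReal.toReal_mono (by finiteness [hf.2])
    (eLpNorm_le_mul_eLpNorm_of_ae_le_mul hbound 2)).trans_eq ?_
  rw [ENNReal.toReal_mul, ENNReal.toReal_ofReal (by positivity), mul_comm]

end IntegralTailOfProduct

/-- If `f ∈ H^{0,1}(ℝ⁺)` and `g ∈ H^{1,1}(ℝ⁺)`, then `x ↦ ∫_x^∞ f g` belongs to
`H^{1,1}(ℝ⁺)` (it is square integrable, differentiable with derivative `-f g`,
and `x ↦ x ∫_x^∞ f g` is square integrable), with norm bounded by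
`c ‖f‖_{H^{0,1}} ‖g‖_{H^{1,1}}` for an absolute constant `c`. -/
theorem integral_tail_mem_H11 :
    ∃ c : ℝ, 0 < c ∧
      ∀ (f g g' : ℝ → ℂ),
        MemLp f 2 (volume.restrict (Ioi (0:ℝ))) →
        MemLp (fun x : ℝ => (x : ℂ) * f x) 2 (volume.restrict (Ioi (0:ℝ))) →
        MemLp g 2 (volume.restrict (Ioi (0:ℝ))) →
        MemLp g' 2 (volume.restrict (Ioi (0:ℝ))) →
        MemLp (fun x : ℝ => (x : ℂ) * g x) 2 (volume.restrict (Ioi (0:ℝ))) →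
        (∀ x ∈ Ioi (0:ℝ), HasDerivAt g (g' x) x) →
        MemLp (fun x : ℝ => ∫ y in Ioi x, f y * g y) 2 (volume.restrict (Ioi (0:ℝ))) ∧
        (∀ᵐ x ∂(volume.restrict (Ioi (0:ℝ))),
          HasDerivAt (fun x : ℝ => ∫ y in Ioi x, f y * g y) (-(f x * g x)) x) ∧
        MemLp (fun x : ℝ => (x : ℂ) * ∫ y in Ioi x, f y * g y) 2
          (volume.restrict (Ioi (0:ℝ))) ∧
        normH11plus (fun x : ℝ => ∫ y in Ioi x, f y * g y) (fun x => -(f x * g x)) ≤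
          c * normH01plus f * normH11plus g g' := by
  refine ⟨3, three_pos, fun f g g' hf hxf hg hg' hxg hderiv => ?_⟩
  obtain ⟨hT, hT_le⟩ := memLp_and_eLpNorm_integral_Ioi_mul_le hf hxf hg
  obtain ⟨hxT, hxT_le⟩ := memLp_and_eLpNorm_ofReal_mul_integral_Ioi_mul_le hf hxf hg hxg
  have hfg_le := eLpNorm_mul_le_of_hasDerivAt hf hg hg' hderiv
  refine ⟨hT, ae_hasDerivAt_integral_Ioi (hf.integrable_mul hg), hxT, ?_⟩
  unfold normH01plus normH11plus at *
  rw [show (fun x => -(f x * g x)) = -fun x => f x * g x from rfl, eLpNorm_neg]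
  have hnonneg := fun a : ℝ≥0∞ => a.toReal_nonneg
  nlinarith [hnonneg (eLpNorm f 2 μ₊), hnonneg (eLpNorm (fun x : ℝ => (x : ℂ) * f x) 2 μ₊),
    hnonneg (eLpNorm g 2 μ₊), hnonneg (eLpNorm g' 2 μ₊),
    hnonneg (eLpNorm (fun x : ℝ => (x : ℂ) * g x) 2 μ₊)]
end

section
/- Suppose U is a neighborhood of the origin in ℂ × ℝ and h : U → ℂ is smooth and holomorphic with respect to the first variable, with h(0,0) = 0 and ∂h/∂s(0,0) ≠ 0 (s the real variable). Then for all sufficiently small s ≠ 0, every zero of h(·, s) near z = 0 is simple. -/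
open Complex Filter Topology

set_option maxHeartbeats 2000000 in
/-- (Beals–Deift–Tomei, p.72.)  Suppose `U` is a neighborhood of the origin in
`ℂ × ℝ` and `h : ℂ × ℝ → ℂ` is smooth on `U` and holomorphic with respect to
the first variable, with `h(0,0) = 0` and `∂h/∂s(0,0) ≠ 0`.  Then for all
sufficiently small `s ≠ 0`, every zero of `h(·,s)` near `z = 0` is simple. -/
theorem zeros_simple_of_perturbation (U : Set (ℂ × ℝ)) (hU : IsOpen U)
    (hmem : ((0 : ℂ), (0 : ℝ)) ∈ U) (h : ℂ → ℝ → ℂ)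
    (hsmooth : ContDiffOn ℝ (⊤ : ℕ∞) (fun p : ℂ × ℝ => h p.1 p.2) U)
    (hhol : ∀ z : ℂ, ∀ s : ℝ, (z, s) ∈ U → DifferentiableAt ℂ (fun w => h w s) z)
    (h00 : h 0 0 = 0)
    (hds : deriv (fun s : ℝ => h 0 s) 0 ≠ 0) :
    ∃ ε > (0:ℝ), ∀ s : ℝ, s ≠ 0 → |s| < ε →
      ∀ z : ℂ, ‖z‖ < ε → h z s = 0 → deriv (fun w => h w s) z ≠ 0 := by
  classical
  set F : ℂ × ℝ → ℂ := fun p => h p.1 p.2 with hFdef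
  have hsm : ContDiffOn ℝ 2 F U := hsmooth.of_le (WithTop.coe_le_coe.mpr le_top)
  have hFdiff : ∀ p ∈ U, DifferentiableAt ℝ F p := fun p hp =>
    (hsm.differentiableOn (by norm_num)).differentiableAt (hU.mem_nhds hp)
  set G : ℂ × ℝ → (ℂ × ℝ) →L[ℝ] ℂ := fun p => fderiv ℝ F p with hGdef
  have hG1 : ContDiffOn ℝ 1 G U := hsm.fderiv_of_isOpen hU (by norm_num)
  set Gz : ℂ × ℝ → ℂ := fun p => G p (1, 0) with hGzdef
  set Gs : ℂ × ℝ → ℂ := fun p => G p (0, 1) with hGsdef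
  have happly : ∀ v : ℂ × ℝ, ContDiffOn ℝ 1 (fun p => G p v) U := by
    intro v
    exact (ContinuousLinearMap.apply ℝ ℂ v).contDiff.comp_contDiffOn hG1
  have hGz1 : ContDiffOn ℝ 1 Gz U := happly _
  have hGs1 : ContDiffOn ℝ 1 Gs U := happly _
  -- derivative in s
  have key1 : ∀ z s, (z, s) ∈ U → HasDerivAt (fun t => h z t) (Gs (z, s)) s := by
    intro z s hp
    have hF' : HasFDerivAt F (G (z, s)) (z, s) := (hFdiff _ hp).hasFDerivAt
    have hι : HasDerivAt (fun t : ℝ => ((z, t) : ℂ × ℝ)) ((0 : ℂ), (1 : ℝ)) s :=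
      (hasDerivAt_const s z).prodMk (hasDerivAt_id s)
    exact hF'.comp_hasDerivAt s hι
  -- complex derivative in z
  have key2 : ∀ z s, (z, s) ∈ U → deriv (fun w => h w s) z = Gz (z, s) := by
    intro z s hp
    have hdC : DifferentiableAt ℂ (fun w => h w s) z := hhol z s hp
    have hC : HasFDerivAt (fun w => h w s)
        ((fderiv ℂ (fun w => h w s) z).restrictScalars ℝ) z :=
      hdC.hasFDerivAt.restrictScalars ℝ
    have hι : HasFDerivAt (fun w : ℂ => ((w, s) : ℂ × ℝ))
        ((ContinuousLinearMap.id ℝ ℂ).prod (0 : ℂ →L[ℝ] ℝ)) z :=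
      (hasFDerivAt_id z).prodMk (hasFDerivAt_const s z)
    have hR : HasFDerivAt (fun w : ℂ => h w s)
        ((G (z, s)).comp ((ContinuousLinearMap.id ℝ ℂ).prod (0 : ℂ →L[ℝ] ℝ))) z :=
      by have := ((hFdiff _ hp).hasFDerivAt).comp z hι; exact this
    have := hC.unique hR
    have h1 : deriv (fun w => h w s) z = fderiv ℂ (fun w => h w s) z 1 := rfl
    rw [h1]
    have := congrArg (fun (L : ℂ →L[ℝ] ℂ) => L 1) this
    simpa using this
  set a : ℂ := Gs (0, 0) with hadef
  have ha : a ≠ 0 := by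
    have := (key1 0 0 hmem).deriv
    rw [hadef, ← this]; exact hds
  have ha0 : (0:ℝ) < ‖a‖ := norm_pos_iff.mpr ha
  -- choose a radius r with closedBall ⊆ U and Gs close to a on it
  obtain ⟨r, hr0, hrU, hrGs⟩ : ∃ r > (0:ℝ), Metric.closedBall (0 : ℂ × ℝ) r ⊆ U ∧
      ∀ p ∈ Metric.closedBall (0 : ℂ × ℝ) r, ‖Gs p - a‖ ≤ ‖a‖ / 2 := by
    have hcont : ContinuousAt Gs (0, 0) :=
      (hGs1.continuousOn).continuousAt (hU.mem_nhds hmem)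
    have hev : ∀ᶠ p in 𝓝 ((0 : ℂ), (0 : ℝ)), ‖Gs p - a‖ ≤ ‖a‖ / 2 := by
      have : Filter.Tendsto Gs (𝓝 ((0 : ℂ), (0 : ℝ))) (𝓝 a) := hcont
      have := this (Metric.closedBall_mem_nhds a (show (0:ℝ) < ‖a‖/2 by positivity))
      filter_upwards [this] with p hp
      simpa [dist_eq_norm] using Metric.mem_closedBall.mp hp
    have h2 : U ∈ 𝓝 ((0 : ℂ), (0 : ℝ)) := hU.mem_nhds hmem
    obtain ⟨r, hr0, hr⟩ := Metric.nhds_basis_closedBall.mem_iff.mp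
      (Filter.inter_mem h2 hev)
    exact ⟨r, hr0, fun p hp => (hr hp).1, fun p hp => (hr hp).2⟩
  -- bound on the fderiv of Gz on the closed ball
  obtain ⟨K, hK0, hKb⟩ : ∃ K ≥ (0:ℝ), ∀ p ∈ Metric.closedBall (0 : ℂ × ℝ) r,
      DifferentiableAt ℝ Gz p ∧ ‖fderiv ℝ Gz p‖ ≤ K := by
    have hdiff : ∀ p ∈ Metric.closedBall (0 : ℂ × ℝ) r, DifferentiableAt ℝ Gz p :=
      fun p hp => (hGz1.differentiableOn one_ne_zero).differentiableAt (hU.mem_nhds (hrU hp))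
    have hcont : ContinuousOn (fun p => ‖fderiv ℝ Gz p‖) (Metric.closedBall (0 : ℂ × ℝ) r) :=
      ((hGz1.continuousOn_fderiv_of_isOpen hU le_rfl).mono hrU).norm
    obtain ⟨K, hK⟩ := (isCompact_closedBall (0 : ℂ × ℝ) r).exists_bound_of_continuousOn hcont
    have h0 : (0 : ℂ × ℝ) ∈ Metric.closedBall (0 : ℂ × ℝ) r := Metric.mem_closedBall_self hr0.le
    exact ⟨K, le_trans (norm_nonneg _) (by simpa using hK _ h0), fun p hp => ⟨hdiff p hp, by simpa using hK p hp⟩⟩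
  have memball : ∀ (z : ℂ) (s : ℝ), ‖z‖ ≤ r → |s| ≤ r →
      (z, s) ∈ Metric.closedBall (0 : ℂ × ℝ) r := by
    intro z s h1 h2
    simp only [Metric.mem_closedBall, dist_zero_right, Prod.norm_def]
    simpa using max_le h1 h2
  -- E1 : lower bound on the s-variation
  have E1 : ∀ (z : ℂ) (s : ℝ), ‖z‖ ≤ r → |s| ≤ r → ‖a‖ / 2 * |s| ≤ ‖h z s - h z 0‖ := by
    intro z s hz hs
    have hsub : ∀ t ∈ Set.uIcc (0:ℝ) s, (z, t) ∈ Metric.closedBall (0 : ℂ × ℝ) r := by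
      intro t ht
      refine memball z t hz ?_
      have habs : |t| ≤ |s| := by
        rcases Set.mem_uIcc.mp ht with ⟨h1, h2⟩ | ⟨h1, h2⟩
        · rw [_root_.abs_of_nonneg h1]; exact h2.trans (le_abs_self s)
        · rw [_root_.abs_of_nonpos h2]; exact (neg_le_neg h1).trans (neg_le_abs s)
      exact habs.trans hs
    have hder : ∀ t ∈ Set.uIcc (0:ℝ) s,
        HasDerivWithinAt (fun t => h z t - t • a) (Gs (z, t) - a) (Set.uIcc (0:ℝ) s) t := by
      intro t ht
      have hsa : HasDerivAt (fun t : ℝ => t • a) a t := by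
        simpa using (hasDerivAt_id t).smul_const a
      exact ((key1 z t (hrU (hsub t ht))).sub hsa).hasDerivWithinAt
    have hbound : ∀ t ∈ Set.uIcc (0:ℝ) s, ‖Gs (z, t) - a‖ ≤ ‖a‖ / 2 :=
      fun t ht => hrGs _ (hsub t ht)
    have := (convex_uIcc (0:ℝ) s).norm_image_sub_le_of_norm_hasDerivWithin_le
      hder hbound Set.left_mem_uIcc Set.right_mem_uIcc
    simp only [zero_smul, sub_zero] at this
    have h2 : ‖s • a‖ - ‖h z s - s • a - h z 0‖ ≤ ‖h z s - h z 0‖ := by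
      have := norm_sub_norm_le (s • a) (s • a - (h z s - h z 0))
      have e : s • a - (s • a - (h z s - h z 0)) = h z s - h z 0 := by abel
      rw [e] at this
      have e2 : s • a - (h z s - h z 0) = -(h z s - s • a - h z 0) := by abel
      rw [e2, norm_neg] at this
      linarith
    have h3 : ‖s • a‖ = |s| * ‖a‖ := by
      rw [norm_smul, Real.norm_eq_abs]
    have h4 : ‖h z s - s • a - h z 0‖ ≤ ‖a‖ / 2 * |s| := by
      simpa [Real.norm_eq_abs] using this
    rw [h3] at h2
    linarith
  -- E2 : Lipschitz bound for Gz in s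
  have E2 : ∀ (z : ℂ) (s : ℝ), ‖z‖ ≤ r → |s| ≤ r → ‖Gz (z, s) - Gz (z, 0)‖ ≤ K * |s| := by
    intro z s hz hs
    have hmem1 := memball z s hz hs
    have hmem0 := memball z 0 hz (by simpa using hr0.le)
    have := (convex_closedBall (0 : ℂ × ℝ) r).norm_image_sub_le_of_norm_fderiv_le
      (fun p hp => (hKb p hp).1) (fun p hp => (hKb p hp).2) hmem0 hmem1
    calc ‖Gz (z, s) - Gz (z, 0)‖ ≤ K * ‖((z, s) : ℂ × ℝ) - (z, 0)‖ := this
      _ = K * |s| := by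
          congr 1
          simp [Prod.norm_def, Prod.sub_def, Real.norm_eq_abs, abs_nonneg]
  -- the analytic slice at s = 0
  set f0 : ℂ → ℂ := fun w => h w 0 with hf0def
  have hA : AnalyticAt ℂ f0 0 := by
    rw [Complex.analyticAt_iff_eventually_differentiableAt]
    have hUnhd : ∀ᶠ w : ℂ in 𝓝 0, ((w, (0:ℝ)) : ℂ × ℝ) ∈ U := by
      have hc : Continuous (fun w : ℂ => ((w, (0:ℝ)) : ℂ × ℝ)) := continuous_id.prodMk continuous_const
      exact hc.continuousAt.preimage_mem_nhds (hU.mem_nhds hmem)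
    filter_upwards [hUnhd] with w hw
    exact hhol w 0 hw
  by_cases hev : ∀ᶠ w : ℂ in 𝓝 0, f0 w = 0
  · -- case A : the slice vanishes identically near 0; then h(·,s) has no zeros at all
    obtain ⟨r₂, hr₂0, hr₂⟩ := Metric.eventually_nhds_iff_ball.mp hev
    refine ⟨min r r₂, lt_min hr0 hr₂0, ?_⟩
    intro s hs0 hs z hz hzero
    exfalso
    have hznorm : ‖z‖ < min r r₂ := by exact hz
    have hz' : ‖z‖ ≤ r := le_of_lt (lt_of_lt_of_le hznorm (min_le_left _ _))
    have hs' : |s| ≤ r := le_of_lt (lt_of_lt_of_le hs (min_le_left _ _))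
    have h0z : f0 z = 0 := hr₂ z (by
      simpa [Metric.mem_ball, dist_zero_right] using lt_of_lt_of_le hznorm (min_le_right _ _))
    have hE := E1 z s hz' hs'
    rw [hzero] at hE
    have h0z' : h z 0 = 0 := h0z
    rw [h0z'] at hE
    simp only [sub_zero, norm_zero] at hE
    have : (0:ℝ) < ‖a‖ / 2 * |s| := by
      have : (0:ℝ) < |s| := abs_pos.mpr hs0
      positivity
    linarith
  · -- case B : the slice has a zero of finite order m ≥ 1
    have hne : analyticOrderAt f0 0 ≠ ⊤ := fun hh => hev (analyticOrderAt_eq_top.mp hh)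
    obtain ⟨m, hm⟩ := WithTop.ne_top_iff_exists.mp hne
    obtain ⟨u, hu_an, hu0, hequ⟩ := hA.analyticOrderAt_eq_natCast.mp hm.symm
    have hequ' : ∀ᶠ w : ℂ in 𝓝 0, f0 w = w ^ m * u w := by
      filter_upwards [hequ] with w hw
      simpa [smul_eq_mul] using hw
    have hm1 : 1 ≤ m := by
      by_contra hcon
      have h0 : m = 0 := by omega
      have hself := hequ'.self_of_nhds
      rw [h0] at hself
      simp only [pow_zero, one_mul] at hself
      exact hu0 (by rw [← hself]; exact h00)
    set c0 : ℝ := ‖u 0‖ with hc0def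
    have hc0pos : (0:ℝ) < c0 := norm_pos_iff.mpr hu0
    set M' : ℝ := ‖fderiv ℂ u 0‖ + 1 with hM'def
    have hM'0 : (0:ℝ) ≤ M' := by positivity
    have hub : ∀ᶠ w : ℂ in 𝓝 0, ‖u w - u 0‖ ≤ c0 / 2 := by
      have hcont : ContinuousAt u 0 := hu_an.continuousAt
      have := hcont (Metric.closedBall_mem_nhds (u 0) (show (0:ℝ) < c0/2 by positivity))
      filter_upwards [this] with w hw
      simpa [dist_eq_norm] using Metric.mem_closedBall.mp hw
    have hfd : ∀ᶠ w : ℂ in 𝓝 0, ‖deriv u w‖ ≤ M' := by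
      have hcont : ContinuousAt (fderiv ℂ u) 0 := hu_an.fderiv.continuousAt
      have := hcont (Metric.closedBall_mem_nhds (fderiv ℂ u 0) (show (0:ℝ) < 1 by norm_num))
      filter_upwards [this] with w hw
      have h1 : ‖fderiv ℂ u w - fderiv ℂ u 0‖ ≤ 1 := by
        simpa [dist_eq_norm] using Metric.mem_closedBall.mp hw
      have h2 : ‖fderiv ℂ u w‖ ≤ M' := by
        have := norm_sub_norm_le (fderiv ℂ u w) (fderiv ℂ u 0)
        rw [hM'def]; linarith
      calc ‖deriv u w‖ = ‖fderiv ℂ u w 1‖ := rfl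
        _ ≤ ‖fderiv ℂ u w‖ * ‖(1:ℂ)‖ := (fderiv ℂ u w).le_opNorm 1
        _ ≤ M' := by simpa using h2
    have hud : ∀ᶠ w : ℂ in 𝓝 0, DifferentiableAt ℂ u w :=
      hu_an.eventually_analyticAt.mono fun w hw => hw.differentiableAt
    obtain ⟨r₃, hr₃0, hr₃⟩ := Metric.eventually_nhds_iff_ball.mp
      (hequ'.and (hub.and (hfd.and hud)))
    set B : ℝ := ‖a‖ * M' + 3 * K * c0 with hBdef
    have hB0 : (0:ℝ) ≤ B := by positivity
    set ε : ℝ := min (min r r₃) (‖a‖ * c0 / (2 * (B + 1))) with hεdef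
    have hε0 : (0:ℝ) < ε := by
      refine lt_min (lt_min hr0 hr₃0) (by positivity)
    refine ⟨ε, hε0, ?_⟩
    intro s hs0 hs z hz hzero hder
    exfalso
    have hznorm : ‖z‖ < ε := by exact hz
    have hzr : ‖z‖ ≤ r := le_of_lt (lt_of_lt_of_le hznorm ((min_le_left _ _).trans (min_le_left _ _)))
    have hsr : |s| ≤ r := le_of_lt (lt_of_lt_of_le hs ((min_le_left _ _).trans (min_le_left _ _)))
    have hzr₃ : ‖z‖ < r₃ := lt_of_lt_of_le hznorm ((min_le_left _ _).trans (min_le_right _ _))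
    have hUzs : ((z, s) : ℂ × ℝ) ∈ U := hrU (memball z s hzr hsr)
    have hUz0 : ((z, (0:ℝ)) : ℂ × ℝ) ∈ U := hrU (memball z 0 hzr (by simpa using hr0.le))
    have hGz0 : Gz (z, s) = 0 := by rw [← key2 z s hUzs]; exact hder
    obtain ⟨heqz, hubz, hfdz, hudz⟩ := hr₃ z (by simpa [Metric.mem_ball, dist_zero_right] using hzr₃)
    -- norms of u z
    have huzu : ‖u z‖ ≤ 3 / 2 * c0 := by
      have := norm_sub_norm_le (u z) (u 0)
      have hc : ‖u 0‖ = c0 := rfl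
      linarith [hubz]
    have huzl : c0 / 2 ≤ ‖u z‖ := by
      have h1 := norm_sub_norm_le (u 0) (u z)
      rw [norm_sub_rev] at h1
      have hc : ‖u 0‖ = c0 := rfl
      linarith [hubz]
    -- E1 gives a bound |s| ≲ ‖z‖ ^ m
    have hE1 := E1 z s hzr hsr
    rw [hzero] at hE1
    have heqz' : h z 0 = z ^ m * u z := heqz
    have hE1' : ‖a‖ / 2 * |s| ≤ ‖z‖ ^ m * ‖u z‖ := by
      rw [zero_sub, norm_neg, heqz'] at hE1
      simpa [norm_mul, norm_pow] using hE1
    have hzne : z ≠ 0 := by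
      rintro rfl
      have hP : (‖(0:ℂ)‖:ℝ) ^ m = 0 := by
        simp [zero_pow (show m ≠ 0 by omega)]
      rw [hP, zero_mul] at hE1'
      have hspos : (0:ℝ) < |s| := abs_pos.mpr hs0
      nlinarith
    have hnz : (0:ℝ) < ‖z‖ := norm_pos_iff.mpr hzne
    have hsB : K * |s| * ‖a‖ ≤ K * (3 * c0) * ‖z‖ ^ m := by
      have h1 : ‖z‖ ^ m * ‖u z‖ ≤ ‖z‖ ^ m * (3 / 2 * c0) :=
        mul_le_mul_of_nonneg_left huzu (pow_nonneg (norm_nonneg z) m)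
      nlinarith [hE1', hK0]
    -- derivative of the slice at z
    have hdu : DifferentiableAt ℂ u z := hudz
    have heq_nhds : f0 =ᶠ[𝓝 z] fun w => w ^ m * u w := by
      have hball : Metric.ball (0:ℂ) r₃ ∈ 𝓝 z :=
        Metric.isOpen_ball.mem_nhds (by simpa [Metric.mem_ball, dist_zero_right] using hzr₃)
      filter_upwards [hball] with w hw
      exact (hr₃ w hw).1
    have hder_f0 : deriv f0 z = (m : ℂ) * z ^ (m - 1) * u z + z ^ m * deriv u z := by
      rw [heq_nhds.deriv_eq]
      exact ((hasDerivAt_pow m z).mul hdu.hasDerivAt).deriv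
    have hGzz0 : Gz (z, 0) = deriv f0 z := (key2 z 0 hUz0).symm
    have hE2 := E2 z s hzr hsr
    rw [hGz0, zero_sub, norm_neg, hGzz0, hder_f0] at hE2
    have hlow : (m:ℝ) * ‖z‖ ^ (m-1) * ‖u z‖ - ‖z‖ ^ m * ‖deriv u z‖ ≤ K * |s| := by
      have hA' : ‖(m:ℂ) * z ^ (m-1) * u z‖ = (m:ℝ) * ‖z‖ ^ (m-1) * ‖u z‖ := by
        simp [norm_mul, norm_pow]
      have hB' : ‖z ^ m * deriv u z‖ = ‖z‖ ^ m * ‖deriv u z‖ := by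
        simp [norm_mul, norm_pow]
      have h3 := norm_sub_norm_le ((m:ℂ) * z ^ (m-1) * u z) (-(z ^ m * deriv u z))
      rw [sub_neg_eq_add, norm_neg] at h3
      rw [hA', hB'] at h3
      linarith [hE2]
    have hfd' : ‖deriv u z‖ ≤ M' := hfdz
    have c1 : (m:ℝ) * ‖z‖ ^ (m-1) * ‖u z‖ ≤ K * |s| + ‖z‖ ^ m * M' := by
      have := mul_le_mul_of_nonneg_left hfd' (pow_nonneg (norm_nonneg z) m)
      linarith [hlow]
    have c2 : ‖a‖ * ((m:ℝ) * ‖z‖ ^ (m-1) * ‖u z‖) ≤ ‖a‖ * (K * |s| + ‖z‖ ^ m * M') :=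
      mul_le_mul_of_nonneg_left c1 (norm_nonneg a)
    have c3 : ‖a‖ * (K * |s| + ‖z‖ ^ m * M') ≤ ‖z‖ ^ m * B := by
      rw [hBdef]
      nlinarith [hsB]
    have hPsplit : ‖z‖ ^ m = ‖z‖ ^ (m-1) * ‖z‖ := by
      conv_lhs => rw [show m = (m-1) + 1 by omega]
      rw [pow_succ]
    have c4 : ‖a‖ * ((m:ℝ) * ‖u z‖) ≤ ‖z‖ * B := by
      have hpow : (0:ℝ) < ‖z‖ ^ (m-1) := pow_pos hnz _
      have chain : ‖z‖ ^ (m-1) * (‖a‖ * ((m:ℝ) * ‖u z‖)) ≤ ‖z‖ ^ (m-1) * (‖z‖ * B) := by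
        calc ‖z‖ ^ (m-1) * (‖a‖ * ((m:ℝ) * ‖u z‖))
            = ‖a‖ * ((m:ℝ) * ‖z‖ ^ (m-1) * ‖u z‖) := by ring
          _ ≤ ‖a‖ * (K * |s| + ‖z‖ ^ m * M') := c2
          _ ≤ ‖z‖ ^ m * B := c3
          _ = ‖z‖ ^ (m-1) * (‖z‖ * B) := by rw [hPsplit]; ring
      exact le_of_mul_le_mul_left chain hpow
    have hm1' : (1:ℝ) ≤ (m:ℝ) := by exact_mod_cast hm1
    have hmu : ‖a‖ * (c0 / 2) ≤ ‖a‖ * ((m:ℝ) * ‖u z‖) := by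
      have h1 : (1:ℝ) * (c0 / 2) ≤ (m:ℝ) * ‖u z‖ :=
        mul_le_mul hm1' huzl (by positivity) (by positivity)
      exact mul_le_mul_of_nonneg_left (by linarith) (norm_nonneg a)
    have hzeps : ‖z‖ ≤ ‖a‖ * c0 / (2 * (B + 1)) :=
      le_of_lt (lt_of_lt_of_le hznorm (min_le_right _ _))
    have hzB : ‖z‖ * B ≤ (‖a‖ * c0 / (2 * (B + 1))) * B :=
      mul_le_mul_of_nonneg_right hzeps hB0
    have hDB : (‖a‖ * c0 / (2 * (B + 1))) * (B + 1) = ‖a‖ * c0 / 2 := by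
      field_simp
    have hD0 : (0:ℝ) < ‖a‖ * c0 / (2 * (B + 1)) := by positivity
    have e1 : (‖a‖ * c0 / (2 * (B + 1))) * B
        = (‖a‖ * c0 / (2 * (B + 1))) * (B + 1) - (‖a‖ * c0 / (2 * (B + 1))) := by ring
    rw [e1, hDB] at hzB
    have hchain := le_trans hmu (le_trans c4 hzB)
    have he2 : ‖a‖ * (c0 / 2) = ‖a‖ * c0 / 2 := by ring
    rw [he2] at hchain
    linarith [hD0]
end

section
/- Let g ∈ L²(0,∞) and for t ≥ 1 define E₊(z) = ∫_z^∞ e^{-its²/2} ds = t^{-1/2} E₊⁰(√t z), where E₊⁰(z) = ∫_z^∞ e^{-is²/2} ds. Then |∫_0^∞ g(z) E₊(z) dz| ≤ C ‖g‖_{L²} t^{-3/4} for an absolute constant C. -/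
/-!
Integrating by parts with `e^{-is²/2} = (i/s) · d/ds e^{-is²/2}` gives `|E₊⁰(z)| ≤ 2/z` for
`z > 0`, while `|E₊⁰(z)| ≤ |E₊⁰(1)| + 1 ≤ 3` for `0 < z ≤ 1`; so `|E₊⁰(z)| ≤ 3 min(1, 1/z)`, whose
square has integral `18` over `(0, ∞)`. The substitution `u = √t z` turns this into the bound
`18 t^{-3/2}` for the squared `L²` norm of the kernel `z ↦ t^{-1/2} E₊⁰(√t z)`, and Cauchy–Schwarz
concludes.
-/

open MeasureTheory Set Filter Complex

section L2

variable {α E : Type*} [MeasurableSpace α] {μ : Measure α} [NormedAddCommGroup E]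

theorem MeasureTheory.MemLp.eLpNorm_two_eq_ofReal_sqrt {f : α → E} (hf : MemLp f 2 μ) :
    eLpNorm f 2 μ = ENNReal.ofReal √(∫ x, ‖f x‖ ^ 2 ∂μ) := by
  rw [hf.eLpNorm_eq_integral_rpow_norm two_ne_zero ENNReal.ofNat_ne_top, Real.sqrt_eq_rpow]
  norm_num [Real.rpow_two]

theorem norm_integral_mul_le_eLpNorm_two_mul {𝕜 : Type*} [RCLike 𝕜] {f g : α → 𝕜} (hf : MemLp f 2 μ)
    (hg : MemLp g 2 μ) :
    ‖∫ x, f x * g x ∂μ‖ ≤ (eLpNorm f 2 μ).toReal * (eLpNorm g 2 μ).toReal := by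
  have holder := integral_mul_norm_le_Lp_mul_Lq Real.HolderConjugate.two_two
    (by simpa using hf) (by simpa using hg)
  rw [hf.eLpNorm_two_eq_ofReal_sqrt, hg.eLpNorm_two_eq_ofReal_sqrt,
    ENNReal.toReal_ofReal (Real.sqrt_nonneg _), ENNReal.toReal_ofReal (Real.sqrt_nonneg _),
    Real.sqrt_eq_rpow, Real.sqrt_eq_rpow]
  simp only [Real.rpow_two] at holder
  calc ‖∫ x, f x * g x ∂μ‖ ≤ ∫ x, ‖f x‖ * ‖g x‖ ∂μ := by
        simpa only [norm_mul] using norm_integral_le_integral_norm (fun x => f x * g x)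
    _ ≤ _ := holder

end L2

theorem sq_min_one_inv_eqOn_Ioc : EqOn (fun z : ℝ => min 1 z⁻¹ ^ 2) 1 (Ioc 0 1) :=
  fun z hz => by simp [min_eq_left ((one_le_inv₀ hz.1).2 hz.2)]

theorem sq_min_one_inv_eqOn_Ioi : EqOn (fun z : ℝ => min 1 z⁻¹ ^ 2) (· ^ (-2 : ℝ)) (Ioi 1) :=
  fun z (hz : 1 < z) => by
    simp [min_eq_right (inv_le_one_of_one_le₀ hz.le), Real.rpow_neg (zero_le_one.trans hz.le)]

theorem integrableOn_Ioi_sq_min_one_inv : IntegrableOn (fun z : ℝ => min 1 z⁻¹ ^ 2) (Ioi 0) := by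
  rw [← Ioc_union_Ioi_eq_Ioi zero_le_one]
  exact ((integrableOn_const measure_Ioc_lt_top.ne).congr_fun sq_min_one_inv_eqOn_Ioc.symm
    measurableSet_Ioc).union <| (integrableOn_Ioi_rpow_of_lt (by norm_num) one_pos).congr_fun
      sq_min_one_inv_eqOn_Ioi.symm measurableSet_Ioi

theorem integral_Ioi_sq_min_one_inv : ∫ z in Ioi (0 : ℝ), min 1 z⁻¹ ^ 2 = 2 := by
  rw [← Ioc_union_Ioi_eq_Ioi zero_le_one, setIntegral_union (Ioc_disjoint_Ioi le_rfl)
    measurableSet_Ioi (integrableOn_Ioi_sq_min_one_inv.mono_set Ioc_subset_Ioi_self)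
    (integrableOn_Ioi_sq_min_one_inv.mono_set (Ioi_subset_Ioi zero_le_one)),
    setIntegral_congr_fun measurableSet_Ioc sq_min_one_inv_eqOn_Ioc,
    setIntegral_congr_fun measurableSet_Ioi sq_min_one_inv_eqOn_Ioi,
    integral_Ioi_rpow_of_lt (by norm_num) one_pos]
  simp only [Pi.one_apply, integral_const, smul_eq_mul, mul_one, measureReal_restrict_apply_univ,
    Real.volume_real_Ioc]
  norm_num

theorem integrableOn_Ioi_sq_min_one_mul_inv {r : ℝ} (hr : 0 < r) :
    IntegrableOn (fun z : ℝ => min 1 (r * z)⁻¹ ^ 2) (Ioi 0) :=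
  (integrableOn_Ioi_comp_mul_left_iff (fun z : ℝ => min 1 z⁻¹ ^ 2) 0 hr).2
    (by simpa using integrableOn_Ioi_sq_min_one_inv)

theorem integral_Ioi_sq_min_one_mul_inv {r : ℝ} (hr : 0 < r) :
    ∫ z in Ioi (0 : ℝ), min 1 (r * z)⁻¹ ^ 2 = 2 / r := by
  rw [integral_comp_mul_left_Ioi (fun z : ℝ => min 1 z⁻¹ ^ 2) 0 hr, mul_zero,
    integral_Ioi_sq_min_one_inv, smul_eq_mul, inv_mul_eq_div]

noncomputable def fresnelPhase (s : ℝ) : ℂ := cexp (-I * s ^ 2 / 2)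

def IsFresnelTail (E : ℝ → ℂ) : Prop :=
  ∀ z : ℝ, Tendsto (fun R : ℝ => ∫ s in z..R, fresnelPhase s) atTop (nhds (E z))

theorem continuous_fresnelPhase : Continuous fresnelPhase := by
  unfold fresnelPhase; fun_prop

theorem norm_fresnelPhase (s : ℝ) : ‖fresnelPhase s‖ = 1 := by
  rw [fresnelPhase, show -I * (s : ℂ) ^ 2 / 2 = ((-(s ^ 2) / 2 : ℝ) : ℂ) * I by push_cast; ring,
    norm_exp_ofReal_mul_I]

theorem intervalIntegrable_fresnelPhase (a b : ℝ) : IntervalIntegrable fresnelPhase volume a b :=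
  continuous_fresnelPhase.intervalIntegrable a b

/-- Since `fresnelPhase' s = -I s · fresnelPhase s`, we have `fresnelPhase = (I / s) · fresnelPhase'`,
and integrating by parts gains a factor `1 / s`. -/
theorem hasDerivAt_I_div_mul_fresnelPhase {s : ℝ} (hs : s ≠ 0) :
    HasDerivAt (fun x : ℝ => I / x * fresnelPhase x)
      (fresnelPhase s - I / (s : ℂ) ^ 2 * fresnelPhase s) s := by
  have hs' : (s : ℂ) ≠ 0 := ofReal_ne_zero.2 hs
  have hinv : HasDerivAt (fun w : ℂ => I / w) (-(I / (s : ℂ) ^ 2)) s := by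
    simpa [div_eq_mul_inv] using (hasDerivAt_inv hs').const_mul I
  have hphase : HasDerivAt (fun w : ℂ => cexp (-I * w ^ 2 / 2))
      (cexp (-I * (s : ℂ) ^ 2 / 2) * (-I * s)) s :=
    ((((hasDerivAt_pow 2 (s : ℂ)).const_mul (-I)).div_const 2).congr_deriv
      (by push_cast; ring)).cexp
  convert (hinv.mul hphase).comp_ofReal using 1
  · rfl
  simp only [fresnelPhase]
  field_simp
  ring_nf
  rw [I_sq]
  ring

theorem norm_intervalIntegral_fresnelPhase_le {z R : ℝ} (hz : 0 < z) (hzR : z ≤ R) :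
    ‖∫ s in z..R, fresnelPhase s‖ ≤ 2 / z := by
  have hpos : ∀ s ∈ uIcc z R, 0 < s := fun s hs =>
    hz.trans_le (by rw [uIcc_of_le hzR] at hs; exact hs.1)
  have hint : IntervalIntegrable (fun s : ℝ => I / (s : ℂ) ^ 2 * fresnelPhase s) volume z R :=
    (ContinuousOn.mul (continuousOn_const.div (by fun_prop)
      fun s hs => pow_ne_zero _ (ofReal_ne_zero.2 (hpos s hs).ne'))
      continuous_fresnelPhase.continuousOn).intervalIntegrable
  have hnorm : ∀ {s : ℝ}, 0 < s → ‖I / (s : ℂ) * fresnelPhase s‖ = s⁻¹ := fun hs => by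
    simp [norm_fresnelPhase, abs_of_pos hs]
  have hparts : ∫ s in z..R, fresnelPhase s =
      (I / R * fresnelPhase R - I / z * fresnelPhase z) +
        ∫ s in z..R, I / (s : ℂ) ^ 2 * fresnelPhase s := by
    rw [← intervalIntegral.integral_eq_sub_of_hasDerivAt
      (fun s hs => hasDerivAt_I_div_mul_fresnelPhase (hpos s hs).ne')
      ((intervalIntegrable_fresnelPhase z R).sub hint),
      intervalIntegral.integral_sub (intervalIntegrable_fresnelPhase z R) hint]
    ring
  have hremainder : ‖∫ s in z..R, I / (s : ℂ) ^ 2 * fresnelPhase s‖ ≤ z⁻¹ - R⁻¹ := by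
    calc ‖∫ s in z..R, I / (s : ℂ) ^ 2 * fresnelPhase s‖
        ≤ ∫ s in z..R, s ^ (-2 : ℤ) := by
          refine intervalIntegral.norm_integral_le_of_norm_le hzR
            (Eventually.of_forall fun s hs => ?_) (intervalIntegral.intervalIntegrable_zpow ?_)
          · simp [norm_fresnelPhase, abs_of_pos (hz.trans hs.1), zpow_neg]
          · exact Or.inr fun h0 => (hpos 0 h0).false
      _ = z⁻¹ - R⁻¹ := by
          rw [integral_zpow (Or.inr ⟨by norm_num, fun h0 => (hpos 0 h0).false⟩)]
          norm_num
          ring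
  calc ‖∫ s in z..R, fresnelPhase s‖
      ≤ ‖I / R * fresnelPhase R‖ + ‖I / z * fresnelPhase z‖ +
          ‖∫ s in z..R, I / (s : ℂ) ^ 2 * fresnelPhase s‖ := by
        rw [hparts]
        exact (norm_add_le _ _).trans (by gcongr; exact norm_sub_le _ _)
    _ ≤ R⁻¹ + z⁻¹ + (z⁻¹ - R⁻¹) := by
        rw [hnorm (hz.trans_le hzR), hnorm hz]
        gcongr
    _ = 2 / z := by ring

namespace IsFresnelTail

variable {E : ℝ → ℂ}

theorem eq_sub_intervalIntegral (hE : IsFresnelTail E) (a z : ℝ) :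
    E z = E a - ∫ s in a..z, fresnelPhase s := by
  refine tendsto_nhds_unique (hE z) ?_
  refine ((hE a).sub_const (∫ s in a..z, fresnelPhase s)).congr fun R => ?_
  rw [sub_eq_iff_eq_add', intervalIntegral.integral_add_adjacent_intervals
    (intervalIntegrable_fresnelPhase a z) (intervalIntegrable_fresnelPhase z R)]

theorem continuous (hE : IsFresnelTail E) : Continuous E := by
  rw [funext (hE.eq_sub_intervalIntegral 0)]
  exact continuous_const.sub
    (intervalIntegral.continuous_primitive intervalIntegrable_fresnelPhase 0)

theorem norm_le_two_div (hE : IsFresnelTail E) {z : ℝ} (hz : 0 < z) : ‖E z‖ ≤ 2 / z :=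
  le_of_tendsto (hE z).norm <| (eventually_ge_atTop z).mono fun _ hR =>
    norm_intervalIntegral_fresnelPhase_le hz hR

theorem norm_le_three_mul_min (hE : IsFresnelTail E) {z : ℝ} (hz : 0 < z) :
    ‖E z‖ ≤ 3 * min 1 z⁻¹ := by
  rcases le_or_gt 1 z with h1 | h1
  · rw [min_eq_right (inv_le_one_of_one_le₀ h1)]
    linarith [hE.norm_le_two_div hz, inv_pos.2 hz, div_eq_mul_inv 2 z]
  · rw [min_eq_left ((one_le_inv₀ hz).2 h1.le), hE.eq_sub_intervalIntegral 1]
    have hpartial : ‖∫ s in (1 : ℝ)..z, fresnelPhase s‖ ≤ 1 := by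
      refine (intervalIntegral.norm_integral_le_of_norm_le_const
        fun s _ => (norm_fresnelPhase s).le).trans ?_
      rw [one_mul, abs_sub_comm, abs_of_pos (by linarith)]
      linarith
    have hone : ‖E 1‖ ≤ 2 := by simpa using hE.norm_le_two_div one_pos
    linarith [norm_sub_le (E 1) (∫ s in (1 : ℝ)..z, fresnelPhase s)]

theorem eLpNorm_rescale_le (hE : IsFresnelTail E) {r : ℝ} (hr : 0 < r) :
    eLpNorm (fun z => (r : ℂ)⁻¹ * E (r * z)) 2 (volume.restrict (Ioi 0)) ≤
      ENNReal.ofReal √(18 / r ^ 3) := by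
  set ψ : ℝ → ℝ := fun z => 3 * r⁻¹ * min 1 (r * z)⁻¹
  have hψ_sq : (fun z => ψ z ^ 2) = fun z => 9 / r ^ 2 * min 1 (r * z)⁻¹ ^ 2 := by
    ext z; simp only [ψ]; field_simp; ring
  have hψ : MemLp ψ 2 (volume.restrict (Ioi 0)) := by
    refine (memLp_two_iff_integrable_sq (by fun_prop)).2 ?_
    rw [hψ_sq]
    exact (integrableOn_Ioi_sq_min_one_mul_inv hr).const_mul _
  have hdom : ∀ᵐ z ∂volume.restrict (Ioi 0), ‖(r : ℂ)⁻¹ * E (r * z)‖ ≤ ψ z := by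
    refine (ae_restrict_iff' measurableSet_Ioi).2 (Eventually.of_forall fun z (hz : 0 < z) => ?_)
    rw [norm_mul, norm_inv, norm_real, Real.norm_of_nonneg hr.le]
    calc r⁻¹ * ‖E (r * z)‖ ≤ r⁻¹ * (3 * min 1 (r * z)⁻¹) := by
          gcongr; exact hE.norm_le_three_mul_min (mul_pos hr hz)
      _ = ψ z := by ring
  refine (eLpNorm_mono_ae_real hdom).trans_eq ?_
  rw [hψ.eLpNorm_two_eq_ofReal_sqrt]
  simp only [Real.norm_eq_abs, sq_abs]
  rw [hψ_sq, integral_const_mul, integral_Ioi_sq_min_one_mul_inv hr]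
  congr 2
  field_simp
  ring

end IsFresnelTail

/-- Let `g ∈ L²(0,∞)` and for `t ≥ 1` let
`E₊(z) = ∫_z^∞ e^{-its²/2} ds = t^{-1/2} E₊⁰(√t z)`, where
`E₊⁰(z) = ∫_z^∞ e^{-is²/2} ds` is the (improper, Fresnel-type) integral,
i.e. `E₊⁰(z) = lim_{R→∞} ∫_z^R e^{-is²/2} ds`.  Then
`|∫_0^∞ g(z) E₊(z) dz| ≤ C ‖g‖_{L²} t^{-3/4}` for an absolute constant `C`. -/
theorem fresnel_tail_estimate :
    ∃ C : ℝ, 0 < C ∧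
      ∀ (t : ℝ), 1 ≤ t →
      ∀ (g : ℝ → ℂ) (E0 : ℝ → ℂ),
        MemLp g 2 (volume.restrict (Ioi (0:ℝ))) →
        (∀ z : ℝ,
          Tendsto (fun R : ℝ => ∫ s in z..R, Complex.exp (-Complex.I * s ^ 2 / 2))
            atTop (nhds (E0 z))) →
        ‖(∫ z in Ioi (0:ℝ),
              g z * (((Real.sqrt t : ℝ) : ℂ)⁻¹ * E0 (Real.sqrt t * z)))‖ ≤
          C * (eLpNorm g 2 (volume.restrict (Ioi (0:ℝ)))).toReal *
            t ^ (-(3:ℝ)/4) := by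
  refine ⟨√18, by positivity, fun t ht g E hg hlim => ?_⟩
  have hE : IsFresnelTail E := hlim
  have ht0 : 0 < t := one_pos.trans_le ht
  have hkernel := hE.eLpNorm_rescale_le (Real.sqrt_pos.2 ht0)
  have hkernel_memLp : MemLp (fun z => ((√t : ℝ) : ℂ)⁻¹ * E (√t * z)) 2
      (volume.restrict (Ioi 0)) :=
    ⟨by have := hE.continuous; fun_prop, hkernel.trans_lt ENNReal.ofReal_lt_top⟩
  have hscale : √(18 / √t ^ 3) = √18 * t ^ (-(3 : ℝ) / 4) := by
    have hcube : (√t ^ 3)⁻¹ = t ^ (-(3 : ℝ) / 2) := by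
      rw [Real.sqrt_eq_rpow, ← Real.rpow_mul_natCast ht0.le, ← Real.rpow_neg ht0.le]
      norm_num
    rw [Real.sqrt_div' _ (by positivity), div_eq_mul_inv, ← Real.sqrt_inv, hcube,
      Real.sqrt_eq_rpow (t ^ _), ← Real.rpow_mul ht0.le]
    norm_num
  calc _ ≤ (eLpNorm g 2 (volume.restrict (Ioi 0))).toReal *
        (eLpNorm (fun z => ((√t : ℝ) : ℂ)⁻¹ * E (√t * z)) 2 (volume.restrict (Ioi 0))).toReal :=
        norm_integral_mul_le_eLpNorm_two_mul hg hkernel_memLp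
    _ ≤ (eLpNorm g 2 (volume.restrict (Ioi 0))).toReal * (√18 * t ^ (-(3 : ℝ) / 4)) := by
        gcongr
        exact hscale ▸ ENNReal.toReal_le_of_le_ofReal (Real.sqrt_nonneg _) hkernel
    _ = _ := by ring
end

section
/- Let q > 0, u ∈ H^{1,1}(ℝ⁺) with ∫_{x₀}^∞ |u| < 1/2 for some x₀ > 0, and z ∈ ℂ⁺. Then the Volterra-type integral equation f(x) = e₂ + (T f)(x) on [x₀,∞), where (T f)(x) = ∫_{x₀}^x diag(e^{-iz(y-x)}, 0) Q(y) f(y) dy - ∫_x^∞ diag(0, 1) Q(y) f(y) dy and Q = [[0,u],[-conj(u),0]], has a solution f ∈ L^∞([x₀,∞); ℂ²) obtained as the limit of the iterates f₀ = e₂, f_{k+1} = e₂ + T f_k, which converge geometrically: ‖f_{k+1} - f_k‖_{L^∞} ≤ c/2^k. -/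
/-!
For `x ≥ x₀` both integrals in `volterraT` only see `g` on `(x₀, ∞)`, and since `Im z ≥ 0` the
kernel `e^{-iz(y-x)}` has modulus at most `1` for `y ≤ x`; hence
`‖T g x‖ ≤ (∫_{x₀}^∞ |u|) · sup ‖g‖ ≤ sup ‖g‖ / 2`. As `T` is linear on bounded measurable
functions, successive differences of the iterates halve, so the iterates converge uniformly on
`[x₀, ∞)` at a geometric rate, and passing to the limit in `F (k+1) = e₂ + T (F k)` shows that the
limit solves the equation. The measurability of the iterates, which the linearity of `T` needs,
comes from the continuity of `T g` on `[x₀, ∞)`.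
-/

open MeasureTheory Matrix Complex Set Filter

noncomputable def Qmat (u : ℝ → ℂ) (x : ℝ) : Matrix (Fin 2) (Fin 2) ℂ :=
  !![0, u x; -(starRingEnd ℂ) (u x), 0]

/-- The Volterra-type operator
`(T g)(x) = ∫_{x₀}^x diag(e^{-iz(y-x)},0) Q(y) g(y) dy
            - ∫_x^∞ diag(0,1) Q(y) g(y) dy`. -/
noncomputable def volterraT (u : ℝ → ℂ) (z : ℂ) (x₀ : ℝ)
    (g : ℝ → Fin 2 → ℂ) (x : ℝ) : Fin 2 → ℂ :=
  (∫ y in x₀..x,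
      (Matrix.diagonal ![Complex.exp (-(Complex.I * z) * ((y : ℂ) - (x : ℂ))), 0]) *ᵥ
        (Qmat u y *ᵥ g y)) -
    ∫ y in Ioi x, (Matrix.diagonal ![(0:ℂ), 1]) *ᵥ (Qmat u y *ᵥ g y)

open Topology ComplexConjugate

lemma volterraT_eq (u : ℝ → ℂ) (z : ℂ) (x₀ : ℝ) (g : ℝ → Fin 2 → ℂ) (x : ℝ) :
    volterraT u z x₀ g x =
      ![∫ y in x₀..x, cexp (-(I * z) * (y - x)) * (u y * g y 1),
        ∫ y in Ioi x, conj (u y) * g y 0] := by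
  have first_integrand : ∀ y : ℝ, diagonal ![cexp (-(I * z) * (y - x)), 0] *ᵥ (Qmat u y *ᵥ g y)
      = (cexp (-(I * z) * (y - x)) * (u y * g y 1)) • ![1, 0] := fun y => by
    ext i; fin_cases i <;> simp [Qmat, mulVec, dotProduct, mul_comm]
  have second_integrand : ∀ y : ℝ, diagonal ![(0 : ℂ), 1] *ᵥ (Qmat u y *ᵥ g y)
      = -(conj (u y) * g y 0) • ![0, 1] := fun y => by
    ext i; fin_cases i <;> simp [Qmat, mulVec, dotProduct, mul_comm]
  simp_rw [volterraT, first_integrand, second_integrand, intervalIntegral.integral_smul_const,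
    integral_smul_const, integral_neg]
  ext i; fin_cases i <;> simp

lemma norm_cexp_neg_I_mul_sub_le_one {z : ℂ} (hz : 0 ≤ z.im) {x y : ℝ} (hyx : y ≤ x) :
    ‖cexp (-(I * z) * (y - x))‖ ≤ 1 := by
  rw [norm_exp, Real.exp_le_one_iff]
  have : (-(I * z) * (y - x)).re = z.im * (y - x) := by simp [mul_re]
  rw [this]
  exact mul_nonpos_of_nonneg_of_nonpos hz (sub_nonpos.2 hyx)

lemma norm_setIntegral_le_integral_norm_mul {α E V : Type*} [MeasurableSpace α]
    [NormedAddCommGroup E] [NormedSpace ℝ E] [NormedAddCommGroup V] {μ : Measure α}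
    {s t : Set α} {v : α → V}
    {ψ : α → E} {M : ℝ} (hv : IntegrableOn v t μ) (hst : s ⊆ t) (hs : MeasurableSet s)
    (hM : 0 ≤ M) (hψ : ∀ y ∈ s, ‖ψ y‖ ≤ ‖v y‖ * M) :
    ‖∫ y in s, ψ y ∂μ‖ ≤ (∫ y in t, ‖v y‖ ∂μ) * M := by
  have hvM : IntegrableOn (fun y => ‖v y‖ * M) t μ := hv.norm.mul_const M
  calc ‖∫ y in s, ψ y ∂μ‖ ≤ ∫ y in s, ‖v y‖ * M ∂μ :=
        norm_integral_le_of_norm_le (hvM.mono_set hst) (ae_restrict_of_forall_mem hs hψ)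
    _ ≤ ∫ y in t, ‖v y‖ * M ∂μ :=
        setIntegral_mono_set hvM (ae_of_all _ fun y => by positivity) hst.eventuallyLE
    _ = (∫ y in t, ‖v y‖ ∂μ) * M := integral_mul_const M _

lemma continuousOn_Ici_primitive {E : Type*} [NormedAddCommGroup E] [NormedSpace ℝ E]
    {f : ℝ → E} {a : ℝ} (hf : ∀ b, IntegrableOn f (Icc a b)) :
    ContinuousOn (fun x => ∫ t in a..x, f t) (Ici a) := by
  refine continuousOn_of_locally_continuousOn fun x hx => ⟨Iio (x + 1), isOpen_Iio,
    lt_add_one x, ?_⟩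
  have hax : a ≤ x + 1 := by linarith [mem_Ici.1 hx]
  have hprim := intervalIntegral.continuousOn_primitive_interval (b := x + 1)
    (by rw [uIcc_of_le hax]; exact hf (x + 1))
  rw [uIcc_of_le hax] at hprim
  exact hprim.mono fun y hy => ⟨hy.1, hy.2.le⟩

lemma MeasureTheory.IntegrableOn.mul_apply_of_norm_le {α ι : Type*} [MeasurableSpace α] [Fintype ι]
    {μ : Measure α} {s : Set α} {v : α → ℂ} {g : α → ι → ℂ} {M : ℝ} (hv : IntegrableOn v s μ)
    (hs : MeasurableSet s) (hg : AEStronglyMeasurable g (μ.restrict s))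
    (hgM : ∀ y ∈ s, ‖g y‖ ≤ M) (i : ι) :
    IntegrableOn (fun y => v y * g y i) s μ :=
  hv.mul_bdd ((continuous_apply i).comp_aestronglyMeasurable hg)
    (ae_restrict_of_forall_mem hs fun y hy => (norm_le_pi_norm (g y) i).trans (hgM y hy))

lemma MeasureTheory.IntegrableOn.conj {α : Type*} [MeasurableSpace α] {μ : Measure α}
    {s : Set α} {v : α → ℂ} (hv : IntegrableOn v s μ) : IntegrableOn (fun y => conj (v y)) s μ :=
  Complex.conjCLE.toContinuousLinearMap.integrable_comp hv

section VolterraOperator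

variable {u : ℝ → ℂ} {z : ℂ} {x₀ : ℝ} {g h : ℝ → Fin 2 → ℂ}

theorem norm_volterraT_le (hu : IntegrableOn u (Ioi x₀)) (hz : 0 ≤ z.im) {M : ℝ}
    (hgM : ∀ y ∈ Ioi x₀, ‖g y‖ ≤ M) {x : ℝ} (hx : x₀ ≤ x) :
    ‖volterraT u z x₀ g x‖ ≤ (∫ y in Ioi x₀, ‖u y‖) * M := by
  have hM : 0 ≤ M := (norm_nonneg _).trans (hgM (x₀ + 1) (by simp))
  have hgiM : ∀ i, ∀ y ∈ Ioi x₀, ‖g y i‖ ≤ M := fun i y hy =>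
    (norm_le_pi_norm (g y) i).trans (hgM y hy)
  rw [volterraT_eq, pi_norm_le_iff_of_nonneg
    (mul_nonneg (integral_nonneg fun _ => norm_nonneg _) hM), Fin.forall_fin_two]
  constructor
  · rw [Matrix.cons_val_zero, intervalIntegral.integral_of_le hx]
    refine norm_setIntegral_le_integral_norm_mul hu Ioc_subset_Ioi_self measurableSet_Ioc hM
      fun y hy => ?_
    calc ‖cexp (-(I * z) * (y - x)) * (u y * g y 1)‖
        = ‖cexp (-(I * z) * (y - x))‖ * (‖u y‖ * ‖g y 1‖) := by simp only [norm_mul]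
      _ ≤ 1 * (‖u y‖ * M) := by
        gcongr
        exacts [norm_cexp_neg_I_mul_sub_le_one hz hy.2, hgiM 1 y hy.1]
      _ = ‖u y‖ * M := one_mul _
  · rw [Matrix.cons_val_one, Matrix.cons_val_zero]
    refine norm_setIntegral_le_integral_norm_mul hu (Ioi_subset_Ioi hx) measurableSet_Ioi hM
      fun y hy => ?_
    rw [norm_mul, RCLike.norm_conj]
    gcongr
    exact hgiM 0 y (lt_of_le_of_lt hx hy)

theorem volterraT_sub (hu : IntegrableOn u (Ioi x₀))
    (hg : AEStronglyMeasurable g (volume.restrict (Ioi x₀))) {M N : ℝ}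
    (hgM : ∀ y ∈ Ioi x₀, ‖g y‖ ≤ M)
    (hh : AEStronglyMeasurable h (volume.restrict (Ioi x₀)))
    (hhN : ∀ y ∈ Ioi x₀, ‖h y‖ ≤ N) {x : ℝ} (hx : x₀ ≤ x) :
    volterraT u z x₀ (g - h) x = volterraT u z x₀ g x - volterraT u z x₀ h x := by
  have kernel_mul : ∀ φ : ℝ → Fin 2 → ℂ, IntegrableOn (fun y => u y * φ y 1) (Ioi x₀) →
      IntegrableOn (fun y : ℝ => cexp (-(I * z) * (y - x)) * (u y * φ y 1)) (Ioc x₀ x) :=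
    fun φ hφ => (hφ.mono_set Ioc_subset_Ioi_self).continuousOn_mul_of_subset
      (by fun_prop) isCompact_Icc measurableSet_Ioc Ioc_subset_Icc_self
  rw [volterraT_eq, volterraT_eq, volterraT_eq, Matrix.cons_sub_cons, Matrix.cons_sub_cons,
    Matrix.empty_sub_empty]
  refine congrArg₂ (fun a b => ![a, b]) ?_ ?_
  · simp only [intervalIntegral.integral_of_le hx]
    rw [← integral_sub (kernel_mul g (hu.mul_apply_of_norm_le measurableSet_Ioi hg hgM 1))
      (kernel_mul h (hu.mul_apply_of_norm_le measurableSet_Ioi hh hhN 1))]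
    congr 1 with y
    simp only [Pi.sub_apply]
    ring
  · rw [← integral_sub
      ((hu.conj.mul_apply_of_norm_le measurableSet_Ioi hg hgM 0).mono_set (Ioi_subset_Ioi hx))
      ((hu.conj.mul_apply_of_norm_le measurableSet_Ioi hh hhN 0).mono_set (Ioi_subset_Ioi hx))]
    congr 1 with y
    simp only [Pi.sub_apply]
    ring

theorem continuousOn_volterraT (hu : IntegrableOn u (Ioi x₀))
    (hg : AEStronglyMeasurable g (volume.restrict (Ioi x₀))) {M : ℝ}
    (hgM : ∀ y ∈ Ioi x₀, ‖g y‖ ≤ M) : ContinuousOn (volterraT u z x₀ g) (Ici x₀) := by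
  have kernel_split : ∀ x y : ℝ,
      cexp (-(I * z) * (y - x)) * (u y * g y 1)
        = cexp (I * z * x) * (cexp (-(I * z) * y) * (u y * g y 1)) := fun x y => by
    rw [← mul_assoc (cexp (I * z * x)), ← Complex.exp_add]
    ring_nf
  have hψ : ∀ b, IntegrableOn (fun y : ℝ => cexp (-(I * z) * y) * (u y * g y 1)) (Icc x₀ b) :=
    fun b => (((integrableOn_Ici_iff_integrableOn_Ioi).2
      (hu.mul_apply_of_norm_le measurableSet_Ioi hg hgM 1)).mono_set
        Icc_subset_Ici_self).continuousOn_mul (by fun_prop) isCompact_Icc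
  simp_rw [funext (volterraT_eq u z x₀ g), kernel_split, intervalIntegral.integral_const_mul]
  refine continuousOn_pi.2 fun i => ?_
  fin_cases i
  · exact (by fun_prop : Continuous fun x : ℝ => cexp (I * z * x)).continuousOn.mul
      (continuousOn_Ici_primitive hψ)
  · exact (hu.conj.mul_apply_of_norm_le measurableSet_Ioi hg hgM 0).continuousOn_Ici_primitive_Ioi

theorem tendsto_volterraT (hu : IntegrableOn u (Ioi x₀)) (hz : 0 ≤ z.im)
    {G : ℕ → ℝ → Fin 2 → ℂ} {M : ℝ} {ε : ℕ → ℝ}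
    (hG : ∀ k, AEStronglyMeasurable (G k) (volume.restrict (Ioi x₀)))
    (hGM : ∀ k, ∀ y ∈ Ioi x₀, ‖G k y‖ ≤ M)
    (hg : AEStronglyMeasurable g (volume.restrict (Ioi x₀))) (hgM : ∀ y ∈ Ioi x₀, ‖g y‖ ≤ M)
    (hGg : ∀ k, ∀ y ∈ Ioi x₀, ‖G k y - g y‖ ≤ ε k) (hε : Tendsto ε atTop (𝓝 0))
    {x : ℝ} (hx : x₀ ≤ x) :
    Tendsto (fun k => volterraT u z x₀ (G k) x) atTop (𝓝 (volterraT u z x₀ g x)) := by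
  rw [tendsto_iff_norm_sub_tendsto_zero]
  refine squeeze_zero (fun _ => norm_nonneg _) (fun k => ?_)
    (by simpa using hε.const_mul (∫ y in Ioi x₀, ‖u y‖))
  rw [← volterraT_sub hu (hG k) (hGM k) hg hgM hx]
  exact norm_volterraT_le hu hz (hGg k) hx

end VolterraOperator

theorem exists_tendsto_of_norm_succ_sub_le_div_two_pow {X E : Type*} [NormedAddCommGroup E]
    [CompleteSpace E] {F : ℕ → X → E} {s : Set X} {C : ℝ}
    (hF : ∀ k, ∀ x ∈ s, ‖F (k + 1) x - F k x‖ ≤ C / 2 ^ k) :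
    ∃ f : X → E, (∀ x ∈ s, Tendsto (fun k => F k x) atTop (𝓝 (f x))) ∧
      ∀ k, ∀ x ∈ s, ‖F k x - f x‖ ≤ 2 * C / 2 ^ k := by
  have hdist : ∀ x ∈ s, ∀ k, dist (F k x) (F (k + 1) x) ≤ 2 * C / 2 / 2 ^ k := fun x hx k => by
    rw [dist_comm, dist_eq_norm, mul_div_cancel_left₀ C two_ne_zero]
    exact hF k x hx
  refine ⟨fun x => limUnder atTop fun k => F k x, fun x hx =>
    (cauchySeq_of_le_geometric_two (hdist x hx)).tendsto_limUnder, fun k x hx => ?_⟩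
  rw [← dist_eq_norm]
  exact dist_le_of_le_geometric_two_of_tendsto (hdist x hx)
    (cauchySeq_of_le_geometric_two (hdist x hx)).tendsto_limUnder k

section Iteration

variable {u : ℝ → ℂ} {z : ℂ} {x₀ : ℝ} {F : ℕ → ℝ → Fin 2 → ℂ}

lemma norm_e₂ : ‖(![0, 1] : Fin 2 → ℂ)‖ = 1 := by
  simp [Pi.norm_def, Fin.univ_succ]

theorem iterate_continuousOn_and_norm_le_two (hu : IntegrableOn u (Ioi x₀)) (hz : 0 ≤ z.im)
    (hsmall : ∫ y in Ioi x₀, ‖u y‖ ≤ 1 / 2) (hF0 : ∀ x, F 0 x = ![0, 1])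
    (hF : ∀ k x, F (k + 1) x = ![0, 1] + volterraT u z x₀ (F k) x) (k : ℕ) :
    ContinuousOn (F k) (Ici x₀) ∧ ∀ x ∈ Ici x₀, ‖F k x‖ ≤ 2 := by
  induction k with
  | zero =>
    rw [funext hF0]
    exact ⟨continuousOn_const, fun _ _ => by rw [norm_e₂]; norm_num⟩
  | succ k ih =>
    obtain ⟨hcont, hbound⟩ := ih
    have hboundIoi : ∀ y ∈ Ioi x₀, ‖F k y‖ ≤ 2 := fun y hy => hbound y (Ioi_subset_Ici_self hy)
    have hmeas : AEStronglyMeasurable (F k) (volume.restrict (Ioi x₀)) :=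
      (hcont.mono Ioi_subset_Ici_self).aestronglyMeasurable measurableSet_Ioi
    rw [funext (hF k)]
    refine ⟨continuousOn_const.add (continuousOn_volterraT hu hmeas hboundIoi), fun x hx => ?_⟩
    calc ‖![0, 1] + volterraT u z x₀ (F k) x‖
        ≤ ‖(![0, 1] : Fin 2 → ℂ)‖ + ‖volterraT u z x₀ (F k) x‖ := norm_add_le _ _
      _ ≤ 1 + (∫ y in Ioi x₀, ‖u y‖) * 2 := by
        rw [norm_e₂]
        gcongr
        exact norm_volterraT_le hu hz hboundIoi hx
      _ ≤ 2 := by linarith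

theorem norm_iterate_succ_sub_le (hu : IntegrableOn u (Ioi x₀)) (hz : 0 ≤ z.im)
    (hsmall : ∫ y in Ioi x₀, ‖u y‖ ≤ 1 / 2) (hF0 : ∀ x, F 0 x = ![0, 1])
    (hF : ∀ k x, F (k + 1) x = ![0, 1] + volterraT u z x₀ (F k) x) (k : ℕ) :
    ∀ x ∈ Ici x₀, ‖F (k + 1) x - F k x‖ ≤ 1 / 2 ^ k := by
  have hreg := iterate_continuousOn_and_norm_le_two hu hz hsmall hF0 hF
  have hmeas : ∀ j, AEStronglyMeasurable (F j) (volume.restrict (Ioi x₀)) := fun j =>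
    ((hreg j).1.mono Ioi_subset_Ici_self).aestronglyMeasurable measurableSet_Ioi
  have hbound : ∀ j, ∀ y ∈ Ioi x₀, ‖F j y‖ ≤ 2 := fun j y hy =>
    (hreg j).2 y (Ioi_subset_Ici_self hy)
  induction k with
  | zero =>
    intro x hx
    rw [hF, hF0, add_sub_cancel_left]
    calc ‖volterraT u z x₀ (F 0) x‖ ≤ (∫ y in Ioi x₀, ‖u y‖) * 1 :=
          norm_volterraT_le hu hz (fun y _ => (hF0 y).symm ▸ norm_e₂.le) hx
      _ ≤ 1 / 2 ^ 0 := by linarith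
  | succ k ih =>
    intro x hx
    rw [hF, hF k, add_sub_add_left_eq_sub,
      ← volterraT_sub hu (hmeas _) (hbound _) (hmeas k) (hbound k) hx]
    calc ‖volterraT u z x₀ (F (k + 1) - F k) x‖ ≤ (∫ y in Ioi x₀, ‖u y‖) * (1 / 2 ^ k) :=
          norm_volterraT_le hu hz (fun y hy => ih y (Ioi_subset_Ici_self hy)) hx
      _ ≤ 1 / 2 * (1 / 2 ^ k) := by gcongr
      _ = 1 / 2 ^ (k + 1) := by rw [pow_succ]; ring

end Iteration

theorem volterra_iteration_general (u : ℝ → ℂ) (x₀ : ℝ)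
    (hint : IntegrableOn u (Ioi x₀))
    (hsmall : (∫ y in Ioi x₀, ‖u y‖) < 1/2)
    (z : ℂ) (hz : 0 < z.im) :
    ∃ c : ℝ, 0 < c ∧
      ∀ F : ℕ → ℝ → Fin 2 → ℂ,
        (∀ x : ℝ, F 0 x = ![0, 1]) →
        (∀ (k : ℕ) (x : ℝ), F (k+1) x = ![0, 1] + volterraT u z x₀ (F k) x) →
        (∀ k : ℕ, ∀ x ∈ Ici x₀, ‖F (k+1) x - F k x‖ ≤ c / 2 ^ k) ∧
        ∃ f : ℝ → Fin 2 → ℂ,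
          (∀ x ∈ Ici x₀, Tendsto (fun k => F k x) atTop (nhds (f x))) ∧
          (∃ M : ℝ, ∀ x ∈ Ici x₀, ‖f x‖ ≤ M) ∧
          (∀ x ∈ Ici x₀, f x = ![0, 1] + volterraT u z x₀ f x) := by
  refine ⟨1, one_pos, fun F hF0 hF => ?_⟩
  have hreg := iterate_continuousOn_and_norm_le_two hint hz.le hsmall.le hF0 hF
  have hdiff := norm_iterate_succ_sub_le hint hz.le hsmall.le hF0 hF
  obtain ⟨f, hlim, htail⟩ := exists_tendsto_of_norm_succ_sub_le_div_two_pow hdiff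
  have hfM : ∀ x ∈ Ici x₀, ‖f x‖ ≤ 2 := fun x hx =>
    le_of_tendsto' (hlim x hx).norm fun k => (hreg k).2 x hx
  have hFmeas : ∀ k, AEStronglyMeasurable (F k) (volume.restrict (Ioi x₀)) := fun k =>
    ((hreg k).1.mono Ioi_subset_Ici_self).aestronglyMeasurable measurableSet_Ioi
  have hfmeas : AEStronglyMeasurable f (volume.restrict (Ioi x₀)) :=
    aestronglyMeasurable_of_tendsto_ae atTop hFmeas
      (ae_restrict_of_forall_mem measurableSet_Ioi fun x hx => hlim x (Ioi_subset_Ici_self hx))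
  refine ⟨hdiff, f, hlim, ⟨2, hfM⟩, fun x hx => tendsto_nhds_unique
    ((hlim x hx).comp (tendsto_add_atTop_nat 1)) ?_⟩
  simp_rw [Function.comp_def, hF]
  exact (tendsto_volterraT hint hz.le hFmeas (fun k y hy => (hreg k).2 y (Ioi_subset_Ici_self hy))
    hfmeas (fun y hy => hfM y (Ioi_subset_Ici_self hy))
    (fun k y hy => htail k y (Ioi_subset_Ici_self hy))
    ((tendsto_pow_atTop_atTop_of_one_lt one_lt_two).const_div_atTop _) hx).const_add _

/-- For `q > 0`, `u ∈ H^{1,1}(ℝ⁺)` with `∫_{x₀}^∞ |u| < 1/2`, `x₀ > 0` and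
`Im z > 0`, the integral equation `f = e₂ + T f` on `[x₀,∞)` has a bounded
solution `f`, obtained as the limit of the iterates `f₀ = e₂`,
`f_{k+1} = e₂ + T f_k`, which converge geometrically:
`‖f_{k+1} - f_k‖_{L^∞} ≤ c/2^k`. -/
theorem volterra_iteration (q : ℝ) (hq : 0 < q) (u u' : ℝ → ℂ)
    (hAC : ∀ x y : ℝ, 0 ≤ x → 0 ≤ y → u y - u x = ∫ t in x..y, u' t)
    (hu2 : MemLp u 2 (volume.restrict (Ioi (0:ℝ))))
    (hu'2 : MemLp u' 2 (volume.restrict (Ioi (0:ℝ))))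
    (hxu : MemLp (fun x : ℝ => (x : ℂ) * u x) 2 (volume.restrict (Ioi (0:ℝ))))
    (x₀ : ℝ) (hx₀ : 0 < x₀)
    (hint : IntegrableOn u (Ioi x₀))
    (hsmall : (∫ y in Ioi x₀, ‖u y‖) < 1/2)
    (z : ℂ) (hz : 0 < z.im) :
    ∃ c : ℝ, 0 < c ∧
      ∀ F : ℕ → ℝ → Fin 2 → ℂ,
        (∀ x : ℝ, F 0 x = ![0, 1]) →
        (∀ (k : ℕ) (x : ℝ), F (k+1) x = ![0, 1] + volterraT u z x₀ (F k) x) →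
        (∀ k : ℕ, ∀ x ∈ Ici x₀, ‖F (k+1) x - F k x‖ ≤ c / 2 ^ k) ∧
        ∃ f : ℝ → Fin 2 → ℂ,
          (∀ x ∈ Ici x₀, Tendsto (fun k => F k x) atTop (nhds (f x))) ∧
          (∃ M : ℝ, ∀ x ∈ Ici x₀, ‖f x‖ ≤ M) ∧
          (∀ x ∈ Ici x₀, f x = ![0, 1] + volterraT u z x₀ f x) :=
  volterra_iteration_general u x₀ hint hsmall z hz
end
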